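/- arXiv:1302.0792 — 3 statements merged into one kernel-verified Lean document; each statement's English description precedes it below -/
import Mathlib

section
/- For any valid stochastic schedule with limiting relative test frequencies q_i, and for any element e with Q_e = Σ_{i : e ∈ S_i} q_i > 0, the long-run average expected detection time Ē_t[T(e,t)] is at least 1/(2 Q_e). Consequently the optimal memoryless value Σ_e p_e/Q_e* is at most twice the stochastic optimum of the weighted-sum objective. -/
open Finset Filter MeasureTheory
open scoped ENNReal Topology Classical

/-- The waiting time (number of probes, counted from 1) of element `e` from
time `t` along the realized test sequence `σ`; `∞` if `e` is never tested. -/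
noncomputable def waitFn {E : Type*} {m : ℕ} (S : Fin m → Finset E) (e : E)
    (t : ℕ) (σ : ℕ → Fin m) : ℝ≥0∞ :=
  ∑' s : ℕ, if ∀ u < s, e ∉ S (σ (t + u)) then 1 else 0

/-!
Fix a realisation `σ` and a horizon `h`, and let `N` be the number of tests of `e` before `h`.
The times before `h` split into at most `N + 1` runs ending at a test of `e` (or at `h`); along a
run of length `L` the waiting times add up to at least `L (L + 1) / 2`, so by Cauchy–Schwarz
`h² ≤ 2 (N + 1) ∑_{t < h} T(e, t)`. Cauchy–Schwarz for `μ` turns this into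
`h² ≤ 2 E[N + 1] ∑_{t < h} E[T(e, t)]`, and dividing by `h²` gives `1 ≤ 2 Q_e A_e` in the limit.
-/

theorem Finset.sq_card_le_two_mul_sum_of_pos (s : Finset ℕ) (hs : ∀ b ∈ s, 0 < b) :
    #s ^ 2 ≤ 2 * ∑ b ∈ s, b := by
  induction s using Finset.induction_on_max with
  | empty => simp
  | insert a s hlt ih =>
    have ha : a ∉ s := fun h => (hlt a h).false
    have hcard : #s < a := by
      have : s ⊆ Ioo 0 a := fun b hb =>
        mem_Ioo.2 ⟨hs b (mem_insert_of_mem hb), hlt b hb⟩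
      simpa using (card_le_card this).trans_lt (by simpa using hs a (mem_insert_self a s))
    rw [card_insert_of_notMem ha, sum_insert ha]
    have := ih fun b hb => hs b (mem_insert_of_mem hb)
    nlinarith

theorem Finset.sq_card_le_two_mul_card_image_fst_mul_sum_snd {ι : Type*} [DecidableEq ι]
    (s : Finset (ι × ℕ)) (hs : ∀ x ∈ s, 0 < x.2) :
    #s ^ 2 ≤ 2 * #(s.image Prod.fst) * ∑ x ∈ s, x.2 := by
  set T := s.image Prod.fst
  have hmaps : ∀ x ∈ s, x.1 ∈ T := fun x hx => mem_image_of_mem _ hx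
  have hfiber : ∀ a ∈ T, #{x ∈ s | x.1 = a} ^ 2 ≤ 2 * ∑ x ∈ s with x.1 = a, x.2 := by
    intro a _
    have hinj : Set.InjOn Prod.snd (s.filter (·.1 = a) : Set (ι × ℕ)) := by
      rintro ⟨a₁, b₁⟩ h₁ ⟨a₂, b₂⟩ h₂ (rfl : b₁ = b₂)
      simp only [coe_filter, Set.mem_ofPred_eq] at h₁ h₂
      rw [h₁.2, h₂.2]
    have := sq_card_le_two_mul_sum_of_pos ({x ∈ s | x.1 = a}.image Prod.snd) <| by
      simp only [mem_image]
      rintro _ ⟨x, hx, rfl⟩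
      exact hs x (mem_filter.1 hx).1
    rwa [card_image_of_injOn hinj, sum_image hinj] at this
  calc #s ^ 2 = (∑ a ∈ T, #{x ∈ s | x.1 = a}) ^ 2 := by rw [← card_eq_sum_card_fiberwise hmaps]
    _ ≤ #T * ∑ a ∈ T, #{x ∈ s | x.1 = a} ^ 2 := sq_sum_le_card_mul_sum_sq
    _ ≤ #T * ∑ a ∈ T, 2 * ∑ x ∈ s with x.1 = a, x.2 := by gcongr with a ha; exact hfiber a ha
    _ = 2 * #T * ∑ x ∈ s, x.2 := by rw [← mul_sum, sum_fiberwise_of_maps_to hmaps]; ring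

section HitTimes

variable (P : ℕ → Prop)

noncomputable def hitCount (h : ℕ) : ℕ := #{v ∈ range h | P v}

-- Numbering by `hitCount` the runs of times that end at a hit, `v` is the `backWait P v`-th time
-- of its run.
noncomputable def backWait (v : ℕ) : ℕ := #{t ∈ range (v + 1) | ∀ w ∈ Ico t v, ¬P w}

variable {P}

theorem natCast_hitCount (h : ℕ) :
    (hitCount P h : ℝ≥0∞) = ∑ t ∈ range h, if P t then 1 else 0 := by
  rw [hitCount, card_filter]
  push_cast
  rfl

theorem hitCount_mono {a b : ℕ} (hab : a ≤ b) : hitCount P a ≤ hitCount P b :=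
  card_le_card (filter_subset_filter _ (range_subset_range.2 hab))

theorem hitCount_lt_of_hit {a b u : ℕ} (hau : a ≤ u) (hub : u < b) (hu : P u) :
    hitCount P a < hitCount P b := by
  refine card_lt_card ((ssubset_iff_of_subset
    (filter_subset_filter _ (range_subset_range.2 (hau.trans hub.le)))).2 ⟨u, ?_, ?_⟩)
  · simp [hub, hu]
  · simp [hau]

theorem backWait_pos (v : ℕ) : 0 < backWait P v :=
  card_pos.2 ⟨v, by simp +contextual⟩

theorem backWait_lt_of_forall_not {v w : ℕ} (hvw : v < w) (hno : ∀ u ∈ Ico v w, ¬P u) :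
    backWait P v < backWait P w := by
  refine card_lt_card ((ssubset_iff_of_subset fun t ht => ?_).2
    ⟨w, by simp +contextual, by simp [hvw]⟩)
  simp only [mem_filter, mem_range, mem_Ico] at ht ⊢
  refine ⟨by omega, fun u hu => ?_⟩
  rcases lt_or_ge u v with huv | hvu
  exacts [ht.2 u ⟨hu.1, huv⟩, hno u (mem_Ico.2 ⟨hvu, hu.2⟩)]

theorem injective_hitCount_backWait :
    Function.Injective fun v => (hitCount P v, backWait P v) := by
  suffices ∀ v w, v < w → hitCount P v = hitCount P w → backWait P v ≠ backWait P w by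
    intro v w hvw
    simp only [Prod.mk.injEq] at hvw
    by_contra hne
    rcases lt_or_gt_of_ne hne with hlt | hlt
    exacts [this v w hlt hvw.1 hvw.2, this w v hlt hvw.1.symm hvw.2.symm]
  intro v w hvw hcount
  refine (backWait_lt_of_forall_not hvw fun u hu hPu => ?_).ne
  exact (hitCount_lt_of_hit (mem_Ico.1 hu).1 (mem_Ico.1 hu).2 hPu).ne hcount

theorem sq_le_two_mul_hitCount_add_one_mul_sum_backWait (h : ℕ) :
    h ^ 2 ≤ 2 * (hitCount P h + 1) * ∑ v ∈ range h, backWait P v := by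
  set s := (range h).image fun v => (hitCount P v, backWait P v)
  have hinj := (injective_hitCount_backWait (P := P)).injOn (s := range h)
  have key := sq_card_le_two_mul_card_image_fst_mul_sum_snd s <| by
    simp only [s, mem_image]
    rintro _ ⟨v, -, rfl⟩
    exact backWait_pos v
  have hfst : s.image Prod.fst ⊆ range (hitCount P h + 1) := by
    simp only [s, image_image, subset_iff, mem_image, mem_range]
    rintro _ ⟨v, hv, rfl⟩
    exact Nat.lt_succ_of_le (hitCount_mono hv.le)
  rw [card_image_of_injOn hinj, card_range, sum_image hinj] at key
  calc h ^ 2 ≤ _ := key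
    _ ≤ _ := by gcongr; simpa using card_le_card hfst

end HitTimes

section Schedule

variable {E : Type*} {m : ℕ} (S : Fin m → Finset E) (e : E) (σ : ℕ → Fin m)

-- Both sides count the pairs `t ≤ v` with no test of `e` in `[t, v)`, the left one only for `v < h`.
theorem sum_backWait_le_sum_waitFn (h : ℕ) :
    ∑ v ∈ range h, (backWait (fun u => e ∈ S (σ u)) v : ℝ≥0∞) ≤
      ∑ t ∈ range h, waitFn S e t σ := by
  set noTest : ℕ → ℕ → Prop := fun t v => ∀ w ∈ Ico t v, e ∉ S (σ w)
  have hcount : ∑ v ∈ range h, backWait (fun u => e ∈ S (σ u)) v =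
      ∑ t ∈ range h, #{v ∈ Ico t h | noTest t v} := by
    simp only [backWait, card_eq_sum_ones, sum_filter]
    refine sum_comm' fun v t => ?_
    simp only [mem_range, mem_Ico]
    omega
  rw [← Nat.cast_sum, hcount, Nat.cast_sum]
  gcongr with t ht
  have hshift : #{v ∈ Ico t h | noTest t v} = #{s ∈ range (h - t) | ∀ u < s, e ∉ S (σ (t + u))} := by
    rw [card_filter, card_filter, sum_Ico_eq_sum_range]
    refine sum_congr rfl fun s _ => ?_
    have hnoTest : noTest t (t + s) ↔ ∀ u < s, e ∉ S (σ (t + u)) := by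
      refine ⟨fun hno u hu => hno _ (mem_Ico.2 (by omega)), fun hs w hw => ?_⟩
      obtain ⟨u, rfl⟩ := Nat.exists_eq_add_of_le (mem_Ico.1 hw).1
      exact hs u (by have := (mem_Ico.1 hw).2; omega)
    simp only [hnoTest]
  rw [hshift, card_filter, Nat.cast_sum]
  refine le_trans (le_of_eq ?_) (ENNReal.sum_le_tsum (range (h - t)))
  simp only [Nat.cast_ite, Nat.cast_one, Nat.cast_zero]

theorem sq_le_two_mul_hitCount_add_one_mul_sum_waitFn (h : ℕ) :
    (h : ℝ≥0∞) ^ 2 ≤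
      2 * (hitCount (fun u => e ∈ S (σ u)) h + 1) * ∑ t ∈ range h, waitFn S e t σ :=
  calc (h : ℝ≥0∞) ^ 2
      ≤ 2 * (hitCount (fun u => e ∈ S (σ u)) h + 1) *
          ∑ v ∈ range h, (backWait (fun u => e ∈ S (σ u)) v : ℝ≥0∞) := by
        exact_mod_cast sq_le_two_mul_hitCount_add_one_mul_sum_backWait h
    _ ≤ _ := by gcongr _ * ?_; exact sum_backWait_le_sum_waitFn S e σ h

theorem measurable_waitFn (t : ℕ) : Measurable (waitFn S e t) := by
  refine Measurable.tsum fun s => Measurable.ite ?_ measurable_const measurable_const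
  simp only [Set.ofPred_forall]
  exact .iInter fun u => .iInter fun _ =>
    (MeasurableSet.of_discrete (s := {i | e ∉ S i})).preimage (measurable_pi_apply (t + u))

end Schedule

section Coordinates

variable {α : Type*} [MeasurableSpace α] [DiscreteMeasurableSpace α] (p : α → Prop) (h : ℕ)

theorem measurable_hitCount :
    Measurable fun σ : ℕ → α => (hitCount (fun u => p (σ u)) h : ℝ≥0∞) := by
  simp only [natCast_hitCount]
  exact Finset.measurable_sum _ fun t _ =>
    (Measurable.of_discrete (f := fun i : α => if p i then (1 : ℝ≥0∞) else 0)).comp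
      (measurable_pi_apply t)

theorem lintegral_hitCount (μ : Measure (ℕ → α)) :
    ∫⁻ σ, (hitCount (fun u => p (σ u)) h : ℝ≥0∞) ∂μ = ∑ t ∈ range h, μ {σ | p (σ t)} := by
  have hmeas : ∀ t, MeasurableSet {σ : ℕ → α | p (σ t)} := fun t =>
    (MeasurableSet.of_discrete (s := {i | p i})).preimage (measurable_pi_apply t)
  simp_rw [natCast_hitCount]
  rw [lintegral_finsetSum (f := fun t (σ : ℕ → α) => if p (σ t) then (1 : ℝ≥0∞) else 0) _
    fun t _ => measurable_one.ite (hmeas t) measurable_zero]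
  refine sum_congr rfl fun t _ => ?_
  rw [← lintegral_indicator_one (hmeas t)]
  rfl

theorem measure_comp_eval_eq_sum [Fintype α] [DecidablePred p] (μ : Measure (ℕ → α)) (t : ℕ) :
    μ {σ | p (σ t)} = ∑ i ∈ univ.filter p, μ {σ | σ t = i} := by
  calc μ {σ | p (σ t)} = μ ((fun σ : ℕ → α => σ t) ⁻¹' ↑(univ.filter p)) := by
        congr 1; ext σ; simp
    _ = _ := (sum_measure_preimage_singleton _ fun i _ =>
        (measurableSet_singleton i).preimage (measurable_pi_apply t)).symm

end Coordinates

theorem le_lintegral_mul_lintegral {α : Type*} [MeasurableSpace α] {μ : Measure α}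
    [IsProbabilityMeasure μ] {f g : α → ℝ≥0∞} (hf : AEMeasurable f μ) (hg : AEMeasurable g μ)
    {c : ℝ≥0∞} (hc : ∀ x, c ≤ f x * g x) :
    c ≤ (∫⁻ x, f x ∂μ) * ∫⁻ x, g x ∂μ := by
  have hsqrt : ∀ a : ℝ≥0∞, (a ^ (1 / 2 : ℝ)) ^ (2 : ℝ) = a := fun a => by
    rw [← ENNReal.rpow_mul]; norm_num
  have hcs := ENNReal.lintegral_mul_le_Lp_mul_Lq μ Real.HolderConjugate.two_two
    (hf.pow_const (1 / 2 : ℝ)) (hg.pow_const (1 / 2 : ℝ))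
  simp only [Pi.mul_apply, hsqrt] at hcs
  have hc' : c ^ (1 / 2 : ℝ) ≤ ((∫⁻ x, f x ∂μ) * ∫⁻ x, g x ∂μ) ^ (1 / 2 : ℝ) := by
    rw [ENNReal.mul_rpow_of_nonneg _ _ (by norm_num)]
    calc c ^ (1 / 2 : ℝ) = ∫⁻ _, c ^ (1 / 2 : ℝ) ∂μ := by simp
      _ ≤ ∫⁻ x, f x ^ (1 / 2 : ℝ) * g x ^ (1 / 2 : ℝ) ∂μ := lintegral_mono fun x => by
        rw [← ENNReal.mul_rpow_of_nonneg _ _ (by norm_num)]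
        exact ENNReal.rpow_le_rpow (hc x) (by norm_num)
      _ ≤ _ := hcs
  have := ENNReal.rpow_le_rpow hc' (by norm_num : (0 : ℝ) ≤ 2)
  rwa [hsqrt, hsqrt] at this

theorem sq_le_lintegral_hitCount_mul_sum_lintegral_waitFn {E : Type*} {m : ℕ}
    (S : Fin m → Finset E) (e : E) (μ : Measure (ℕ → Fin m)) [IsProbabilityMeasure μ] (h : ℕ) :
    (h : ℝ≥0∞) ^ 2 ≤ 2 * (∫⁻ σ, (hitCount (fun u => e ∈ S (σ u)) h : ℝ≥0∞) ∂μ + 1) *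
      ∑ t ∈ range h, ∫⁻ σ, waitFn S e t σ ∂μ := by
  have hcount := measurable_hitCount (fun i => e ∈ S i) h
  have := le_lintegral_mul_lintegral (μ := μ)
    ((hcount.add_const 1).const_mul 2).aemeasurable
    (Finset.measurable_sum (range h) fun t _ => measurable_waitFn S e t).aemeasurable
    (sq_le_two_mul_hitCount_add_one_mul_sum_waitFn S e · h)
  rwa [lintegral_const_mul _ (hcount.add_const 1), lintegral_add_right _ measurable_const,
    lintegral_const, measure_univ, mul_one,
    lintegral_finsetSum _ fun t _ => measurable_waitFn S e t] at this

theorem ENNReal.inv_div_le_div_of_sq_le_mul {n b w : ℝ≥0∞} (hn₀ : n ≠ 0) (hn : n ≠ ∞)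
    (h : n ^ 2 ≤ b * w) : (b / n)⁻¹ ≤ w / n := by
  rw [ENNReal.inv_div (Or.inl hn) (Or.inl hn₀), ENNReal.le_div_iff_mul_le (Or.inl hn₀) (Or.inl hn),
    div_eq_mul_inv, mul_right_comm, ← div_eq_mul_inv]
  exact ENNReal.div_le_of_le_mul (by rw [← sq, mul_comm w]; exact h)

theorem inv_two_mul_le_of_tendsto_avg_waitFn {E : Type*} {m : ℕ} (S : Fin m → Finset E)
    (μ : Measure (ℕ → Fin m)) [IsProbabilityMeasure μ] {q : Fin m → ℝ≥0∞}
    (hfreq : ∀ i, Tendsto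
      (fun h : ℕ => (∑ t ∈ range h, μ {σ | σ t = i}) / (h : ℝ≥0∞)) atTop (𝓝 (q i)))
    (e : E) {A : ℝ≥0∞}
    (hA : Tendsto (fun h : ℕ => (∑ t ∈ range h, ∫⁻ σ, waitFn S e t σ ∂μ) / (h : ℝ≥0∞))
      atTop (𝓝 A)) :
    (2 * ∑ i ∈ univ.filter (fun i => e ∈ S i), q i)⁻¹ ≤ A := by
  set B : ℕ → ℝ≥0∞ := fun h =>
    2 * (∑ t ∈ range h, ∑ i ∈ univ.filter (fun i => e ∈ S i), μ {σ | σ t = i} + 1)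
  have hB : Tendsto (fun h : ℕ => B h / h) atTop
      (𝓝 (2 * ∑ i ∈ univ.filter (fun i => e ∈ S i), q i)) := by
    have hsplit : ∀ h : ℕ, B h / h = 2 * (∑ i ∈ univ.filter (fun i => e ∈ S i),
        (∑ t ∈ range h, μ {σ | σ t = i}) / h + (h : ℝ≥0∞)⁻¹) := fun h => by
      simp only [B, div_eq_mul_inv, mul_assoc, add_mul, one_mul, sum_mul]
      rw [sum_comm]
    simp only [hsplit]
    simpa using ENNReal.Tendsto.const_mul
      ((tendsto_finsetSum _ fun i _ => hfreq i).add ENNReal.tendsto_inv_nat_nhds_zero)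
      (Or.inr ENNReal.ofNat_ne_top)
  refine le_of_tendsto_of_tendsto hB.inv hA ?_
  filter_upwards [eventually_ge_atTop 1] with h hh
  refine ENNReal.inv_div_le_div_of_sq_le_mul (by simp; omega) (ENNReal.natCast_ne_top h) ?_
  simpa only [B, lintegral_hitCount (fun i => e ∈ S i) h μ,
    measure_comp_eval_eq_sum (fun i => e ∈ S i) μ] using
    sq_le_lintegral_hitCount_mul_sum_lintegral_waitFn S e μ h

theorem ENNReal.sum_div_le_two_mul_sum_mul {ι : Type*} (s : Finset ι) {p Q A : ι → ℝ≥0∞}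
    (h : ∀ i ∈ s, 1 / (2 * Q i) ≤ A i) : ∑ i ∈ s, p i / Q i ≤ 2 * ∑ i ∈ s, p i * A i := by
  rw [mul_sum]
  refine sum_le_sum fun i hi => ?_
  calc p i / Q i = 2 * (p i * (2 * Q i)⁻¹) := by
        rw [ENNReal.mul_inv (by simp) (by simp), mul_left_comm, ← mul_assoc 2,
          ENNReal.mul_inv_cancel two_ne_zero ENNReal.ofNat_ne_top, one_mul, div_eq_mul_inv]
    _ ≤ 2 * (p i * A i) := by rw [← one_div]; gcongr; exact h i hi

theorem stmt_5_general {E : Type*} [Fintype E] {m : ℕ} (S : Fin m → Finset E)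
    (μ : Measure (ℕ → Fin m)) [IsProbabilityMeasure μ]
    (q : Fin m → ℝ≥0∞)
    (hfreq : ∀ i, Tendsto
      (fun h : ℕ => (∑ t ∈ Finset.range h, μ {σ | σ t = i}) / (h : ℝ≥0∞))
      atTop (𝓝 (q i)))
    (Q : E → ℝ≥0∞)
    (hQ : ∀ e, Q e = ∑ i ∈ Finset.univ.filter (fun i => e ∈ S i), q i)
    (A : E → ℝ≥0∞)
    (hA : ∀ e, Tendsto
      (fun h : ℕ =>
        (∑ t ∈ Finset.range h, ∫⁻ σ, waitFn S e t σ ∂μ) / (h : ℝ≥0∞))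
      atTop (𝓝 (A e)))
    (p : E → ℝ≥0∞) :
    (∀ e, 1 / (2 * Q e) ≤ A e) ∧
    ∑ e, p e / Q e ≤ 2 * ∑ e, p e * A e := by
  have hbound : ∀ e, 1 / (2 * Q e) ≤ A e := fun e => by
    rw [one_div, hQ e]
    exact inv_two_mul_le_of_tendsto_avg_waitFn S μ hfreq e (hA e)
  exact ⟨hbound, ENNReal.sum_div_le_two_mul_sum_mul univ fun e _ => hbound e⟩

/-- For any valid stochastic schedule (a probability measure `μ` on test
sequences) with limiting relative test frequencies `q_i` and `Q_e =
∑_{i : e ∈ S_i} q_i > 0`, the long-run average expected detection time `A_e`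
of each element `e` is at least `1/(2 Q_e)`.  Consequently the value
`∑_e p_e/Q_e` of the memoryless schedule with frequencies `q` — hence the
optimal memoryless value — is at most twice the weighted-sum objective
`∑_e p_e A_e` of the stochastic schedule. -/
theorem stmt_5 {E : Type*} [Fintype E] {m : ℕ} (S : Fin m → Finset E)
    (μ : Measure (ℕ → Fin m)) [IsProbabilityMeasure μ]
    (q : Fin m → ℝ≥0∞)
    (hfreq : ∀ i, Tendsto
      (fun h : ℕ => (∑ t ∈ Finset.range h, μ {σ | σ t = i}) / (h : ℝ≥0∞))
      atTop (𝓝 (q i)))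
    (Q : E → ℝ≥0∞)
    (hQ : ∀ e, Q e = ∑ i ∈ Finset.univ.filter (fun i => e ∈ S i), q i)
    (hQpos : ∀ e, 0 < Q e)
    (A : E → ℝ≥0∞)
    (hA : ∀ e, Tendsto
      (fun h : ℕ =>
        (∑ t ∈ Finset.range h, ∫⁻ σ, waitFn S e t σ ∂μ) / (h : ℝ≥0∞))
      atTop (𝓝 (A e)))
    (p : E → ℝ≥0∞) (hp : ∑ e, p e = 1) :
    (∀ e, 1 / (2 * Q e) ≤ A e) ∧
    ∑ e, p e / Q e ≤ 2 * ∑ e, p e * A e :=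
  stmt_5_general S μ q hfreq Q hQ A hA p
end

section
/- Solving max Σ_{t=1}^{N} min{1, y_t/t} subject to y_t ≥ 0 and Σ_{t=1}^{N} y_t ≤ B: the maximum value is at most √(2B) + 1. -/
open Finset

/-- The maximum of `∑_{t=1}^{N} min{1, y_t/t}` subject to `y_t ≥ 0` and
`∑_{t=1}^{N} y_t ≤ B` is at most `√(2B) + 1`. -/
theorem stmt_10 (N : ℕ) (hN : 0 < N) (B : ℝ) (hB : 0 ≤ B)
    (y : ℕ → ℝ) (hy : ∀ t, 0 ≤ y t)
    (hsum : ∑ t ∈ Finset.Icc 1 N, y t ≤ B) :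
    ∑ t ∈ Finset.Icc 1 N, min 1 (y t / t) ≤ Real.sqrt (2 * B) + 1 := by
  set m : ℕ → ℝ := fun t => min 1 (y t / t) with hm
  set S : ℝ := ∑ t ∈ Finset.Icc 1 N, m t with hSdef
  have hm0 : ∀ t, 0 ≤ m t := fun t =>
    le_min zero_le_one (div_nonneg (hy t) (Nat.cast_nonneg t))
  have hm1 : ∀ t, m t ≤ 1 := fun t => min_le_left _ _
  have hsqrt : 0 ≤ Real.sqrt (2 * B) := Real.sqrt_nonneg _
  by_cases hS1 : S ≤ 1
  · linarith
  push_neg at hS1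
  have hS0 : (0:ℝ) ≤ S := by linarith
  -- key: t * m t ≤ y t
  have hkey : ∀ t ∈ Finset.Icc 1 N, (t : ℝ) * m t ≤ y t := by
    intro t ht
    have ht1 : 1 ≤ t := (Finset.mem_Icc.mp ht).1
    have htpos : (0:ℝ) < t := by exact_mod_cast ht1
    calc (t : ℝ) * m t ≤ t * (y t / t) :=
          mul_le_mul_of_nonneg_left (min_le_right _ _) htpos.le
      _ = y t := by field_simp
  have hB' : ∑ t ∈ Finset.Icc 1 N, (t : ℝ) * m t ≤ B :=
    le_trans (Finset.sum_le_sum hkey) hsum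
  have hIcc : Finset.Icc 1 N = Finset.Ioc 0 N := by
    ext x; simp [Finset.mem_Icc, Finset.mem_Ioc]; omega
  -- swap order of summation
  have hswap : ∑ j ∈ Finset.Ico 0 N, ∑ t ∈ Finset.Ioc j N, m t
      = ∑ t ∈ Finset.Ioc 0 N, (t : ℝ) * m t := by
    rw [Finset.sum_comm' (t' := Finset.Ioc 0 N) (s' := fun t => Finset.Ico 0 t)]
    · apply Finset.sum_congr rfl
      intro t _
      rw [Finset.sum_const, Nat.card_Ico, Nat.sub_zero, nsmul_eq_mul]
    · intro j t
      simp only [Finset.mem_Ioc, Finset.mem_Ico]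
      omega
  -- S ≤ N
  have hSN : S ≤ N := by
    have : S ≤ ∑ t ∈ Finset.Icc 1 N, (1:ℝ) :=
      Finset.sum_le_sum fun t _ => hm1 t
    simpa [Nat.card_Icc] using this
  set K : ℕ := ⌈S⌉₊ with hKdef
  have hK1 : 1 ≤ K := by
    rw [hKdef]
    exact Nat.one_le_ceil_iff.mpr (by linarith)
  have hKN : K ≤ N := Nat.ceil_le.mpr hSN
  have hSK : S ≤ (K : ℝ) := Nat.le_ceil S
  have hKS : (K : ℝ) < S + 1 := Nat.ceil_lt_add_one hS0
  -- for each j < K, the tail sum is at least S - j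
  have htail : ∀ j ∈ Finset.Ico 0 K, S - (j:ℝ) ≤ ∑ t ∈ Finset.Ioc j N, m t := by
    intro j hj
    have hjK : j < K := (Finset.mem_Ico.mp hj).2
    have hjN : j ≤ N := le_trans (le_of_lt hjK) hKN
    have hsplit : (∑ t ∈ Finset.Ioc 0 j, m t) + ∑ t ∈ Finset.Ioc j N, m t
        = ∑ t ∈ Finset.Ioc 0 N, m t :=
      Finset.sum_Ioc_consecutive m (Nat.zero_le j) hjN
    have hhead : ∑ t ∈ Finset.Ioc 0 j, m t ≤ j := by
      have : ∑ t ∈ Finset.Ioc 0 j, m t ≤ ∑ t ∈ Finset.Ioc 0 j, (1:ℝ) :=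
        Finset.sum_le_sum fun t _ => hm1 t
      simpa [Nat.card_Ioc] using this
    have hS' : S = ∑ t ∈ Finset.Ioc 0 N, m t := by rw [hSdef, hIcc]
    linarith [hsplit, hhead, hS'.ge]
  -- lower bound for the double sum
  have hlow : ∑ j ∈ Finset.Ico 0 K, (S - (j:ℝ))
      ≤ ∑ j ∈ Finset.Ico 0 N, ∑ t ∈ Finset.Ioc j N, m t := by
    calc ∑ j ∈ Finset.Ico 0 K, (S - (j:ℝ))
        ≤ ∑ j ∈ Finset.Ico 0 K, ∑ t ∈ Finset.Ioc j N, m t :=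
          Finset.sum_le_sum htail
      _ ≤ ∑ j ∈ Finset.Ico 0 N, ∑ t ∈ Finset.Ioc j N, m t := by
          apply Finset.sum_le_sum_of_subset_of_nonneg
          · exact Finset.Ico_subset_Ico le_rfl hKN
          · intro j _ _
            exact Finset.sum_nonneg fun t _ => hm0 t
  -- Gauss sum
  have hgauss : 2 * ∑ j ∈ Finset.Ico 0 K, (j:ℝ) = (K:ℝ) * ((K:ℝ) - 1) := by
    have h := Finset.sum_range_id_mul_two K
    have h2 : ((∑ i ∈ Finset.range K, i) * 2 : ℕ) = (K * (K - 1) : ℕ) := h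
    have h3 : (∑ i ∈ Finset.range K, (i:ℝ)) * 2 = (K:ℝ) * ((K:ℝ) - 1) := by
      have hcast : ((K * (K - 1) : ℕ) : ℝ) = (K:ℝ) * ((K:ℝ) - 1) := by
        push_cast [Nat.cast_sub hK1]
        ring
      rw [← hcast, ← h2]
      push_cast
      ring
    rw [Finset.range_eq_Ico] at h3
    linarith
  have hsum2 : ∑ j ∈ Finset.Ico 0 K, (S - (j:ℝ))
      = (K:ℝ) * S - ∑ j ∈ Finset.Ico 0 K, (j:ℝ) := by
    rw [Finset.sum_sub_distrib, Finset.sum_const, Nat.card_Ico, Nat.sub_zero,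
      nsmul_eq_mul]
  -- combine: B ≥ K*S - K*(K-1)/2
  have hBK : (K:ℝ) * S - (K:ℝ) * ((K:ℝ) - 1) / 2 ≤ B := by
    have h1 : ∑ j ∈ Finset.Ico 0 N, ∑ t ∈ Finset.Ioc j N, m t ≤ B := by
      rw [hswap, ← hIcc]; exact hB'
    have := hlow
    rw [hsum2] at this
    linarith
  have hK1' : (1:ℝ) ≤ (K:ℝ) := by exact_mod_cast hK1
  have h2B : (S - 1) ^ 2 ≤ 2 * B := by nlinarith [sq_nonneg ((K:ℝ) - S)]
  have hsq : Real.sqrt (2 * B) ^ 2 = 2 * B := Real.sq_sqrt (by linarith)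
  nlinarith [hsqrt, h2B, hsq, sq_nonneg (Real.sqrt (2*B) - (S - 1))]
end

section
/- In the exact-cover reduction instance with 3k elements and tests of size exactly 3: (a) any deterministic schedule satisfies, at every time t, max_e T(e,t) ≥ k; (b) at every time t, (1/(3k)) Σ_e T(e,t) ≥ (k+1)/2; and (c) equality in (a) or (b) at time t holds only if the k tests following time t form an exact cover of the 3k elements. -/
/-!
The waiting time of `e` at `t` counts the `s ≥ 0` such that `e` misses the first `s` probes,
so `∑ₑ T(e,t) = ∑ₛ #(elements missed by the first s probes)`. As `s` probes of size `3` hit at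
most `3s` of the `3k` elements, the `s`-th layer has at least `3(k - s)` elements: some element
misses the first `k - 1` probes, and `∑ₑ T(e,t) ≥ 3k(k+1)/2`. Equality in either bound forces
every element to be hit by the first `k` probes, and `k` tests of size `3` covering `3k`
elements are pairwise disjoint by counting.
-/

open Finset
open scoped ENNReal Classical

/-- Waiting time (counted from 1): the number of probes from time `t`
(inclusive) until the first test containing `e` is invoked; `∞` if `e` is
never tested again. -/
noncomputable def detTime {ι E : Type*} (S : ι → Finset E) (σ : ℕ → ι)
    (e : E) (t : ℕ) : ℝ≥0∞ :=
  ∑' s : ℕ, if ∀ u < s, e ∉ S (σ (t + u)) then 1 else 0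

theorem Finset.pairwiseDisjoint_of_sum_card_le_card_biUnion {ι α : Type*} [DecidableEq α]
    {s : Finset ι} {T : ι → Finset α} (h : ∑ i ∈ s, #(T i) ≤ #(s.biUnion T)) :
    (s : Set ι).PairwiseDisjoint T := by
  intro i hi j hj hij
  by_contra hij'
  have hdisj : ¬Disjoint (T i) ((s.erase i).biUnion T) := fun hd =>
    hij' (hd.mono_right (subset_biUnion_of_mem T (mem_erase.2 ⟨hij.symm, hj⟩)))
  have hlt : #(s.biUnion T) < ∑ i ∈ s, #(T i) := calc
    #(s.biUnion T) = #(T i ∪ (s.erase i).biUnion T) := by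
      rw [← biUnion_insert, insert_erase hi]
    _ < #(T i) + #((s.erase i).biUnion T) :=
      (card_union_le _ _).lt_of_ne (mt card_union_eq_card_add_card.1 hdisj)
    _ ≤ #(T i) + ∑ j ∈ s.erase i, #(T j) := Nat.add_le_add_left card_biUnion_le _
    _ = ∑ i ∈ s, #(T i) := add_sum_erase s (fun j => #(T j)) hi
  exact hlt.not_ge h

theorem ENNReal.div_le_div_iff_mul_le_mul {a b c d : ℝ≥0∞} (hb : b ≠ 0) (hb' : b ≠ ∞)
    (hd : d ≠ 0) (hd' : d ≠ ∞) : a / b ≤ c / d ↔ a * d ≤ c * b := by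
  rw [ENNReal.le_div_iff_mul_le (.inl hd) (.inl hd'), ← ENNReal.mul_div_right_comm,
    ENNReal.div_le_iff hb hb']

theorem Finset.sum_range_sub_mul_two (n : ℕ) : (∑ s ∈ range n, (n - s)) * 2 = n * (n + 1) := by
  have hreflect : ∑ s ∈ range n, (n - s) = ∑ s ∈ range (n + 1), s := by
    rw [sum_range_succ', ← sum_range_reflect]
    exact sum_congr rfl fun s hs => by have := mem_range.1 hs; omega
  rw [hreflect, sum_range_id_mul_two, Nat.add_sub_cancel, mul_comm]

section WaitingTime

variable {ι E : Type*} (S : ι → Finset E) (σ : ℕ → ι)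

theorem add_one_le_detTime {e : E} {t n : ℕ} (he : ∀ u < n, e ∉ S (σ (t + u))) :
    (n : ℝ≥0∞) + 1 ≤ detTime S σ e t := calc
  (n : ℝ≥0∞) + 1 = ∑ s ∈ range (n + 1), (if ∀ u < s, e ∉ S (σ (t + u)) then 1 else 0) := by
    rw [sum_congr rfl fun s hs => if_pos fun u hu => he u (hu.trans_le (mem_range_succ_iff.1 hs))]
    simp
  _ ≤ detTime S σ e t := ENNReal.sum_le_tsum _

variable [Fintype E] [DecidableEq E]

noncomputable def untested (t s : ℕ) : Finset E := univ.filter fun e => ∀ u < s, e ∉ S (σ (t + u))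

theorem sum_detTime_eq_tsum_card_untested (t : ℕ) :
    ∑ e, detTime S σ e t = ∑' s, (#(untested S σ t s) : ℝ≥0∞) := by
  simp only [detTime]
  rw [← Summable.tsum_finsetSum fun _ _ => ENNReal.summable]
  congr! with s
  rw [untested, ← sum_boole]
  congr!

theorem card_le_card_untested_add {c : ℕ} (hS : ∀ i, #(S i) ≤ c) (t s : ℕ) :
    Fintype.card E ≤ #(untested S σ t s) + c * s := by
  have hcover : (univ : Finset E) ⊆ untested S σ t s ∪ (range s).biUnion fun u => S (σ (t + u)) := by
    intro e _
    by_cases he : ∀ u < s, e ∉ S (σ (t + u))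
    · exact mem_union_left _ (mem_filter.2 ⟨mem_univ e, he⟩)
    · push Not at he
      obtain ⟨u, hu, hmem⟩ := he
      exact mem_union_right _ (mem_biUnion.2 ⟨u, mem_range.2 hu, hmem⟩)
  calc Fintype.card E = #(univ : Finset E) := card_univ.symm
    _ ≤ #(untested S σ t s) + #((range s).biUnion fun u => S (σ (t + u))) :=
      (card_le_card hcover).trans (card_union_le _ _)
    _ ≤ #(untested S σ t s) + c * s := by
      grw [card_biUnion_le_card_mul _ _ c fun u _ => hS _, card_range, mul_comm]

theorem exists_add_one_le_detTime {c n : ℕ} (hS : ∀ i, #(S i) ≤ c)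
    (hn : c * n < Fintype.card E) (t : ℕ) : ∃ e, (n : ℝ≥0∞) + 1 ≤ detTime S σ e t := by
  have hpos : 0 < #(untested S σ t n) := by
    have := card_le_card_untested_add S σ hS t n; omega
  obtain ⟨e, he⟩ := card_pos.1 hpos
  exact ⟨e, add_one_le_detTime S σ (mem_filter.1 he).2⟩

theorem biUnion_range_eq_univ_iff_untested_eq_empty (t n : ℕ) :
    (range n).biUnion (fun d => S (σ (t + d))) = univ ↔ untested S σ t n = ∅ := by
  simp [untested, eq_univ_iff_forall, filter_eq_empty_iff]

/-- Layer cake: the `s`-th layer `untested S σ t s` has at least `c * (n - s)` elements. -/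
theorem mul_add_two_mul_card_untested_le_sum_detTime {c n : ℕ} (hS : ∀ i, #(S i) ≤ c)
    (hn : c * n ≤ Fintype.card E) (t : ℕ) :
    (c * n * (n + 1) : ℝ≥0∞) + 2 * #(untested S σ t n) ≤ 2 * ∑ e, detTime S σ e t := by
  have hlayer : ∀ s ∈ range n, c * (n - s) ≤ #(untested S σ t s) := fun s hs => by
    have := card_le_card_untested_add S σ hS t s
    have := mem_range.1 hs
    rw [Nat.mul_sub]
    omega
  have hnat : c * n * (n + 1) + 2 * #(untested S σ t n)
      ≤ 2 * ∑ s ∈ range (n + 1), #(untested S σ t s) := by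
    have := sum_le_sum hlayer
    rw [← mul_sum] at this
    have := sum_range_sub_mul_two n
    rw [sum_range_succ]
    nlinarith
  calc (c * n * (n + 1) : ℝ≥0∞) + 2 * #(untested S σ t n)
      ≤ 2 * ∑ s ∈ range (n + 1), (#(untested S σ t s) : ℝ≥0∞) := mod_cast hnat
    _ ≤ 2 * ∑ e, detTime S σ e t := by
      rw [sum_detTime_eq_tsum_card_untested]
      gcongr
      exact ENNReal.sum_le_tsum _

theorem untested_eq_empty_of_forall_detTime_le {t n : ℕ} (h : ∀ e, detTime S σ e t ≤ n) :
    untested S σ t n = ∅ :=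
  eq_empty_of_forall_notMem fun e he =>
    ((add_one_le_detTime S σ (mem_filter.1 he).2).trans (h e)).not_gt
      (ENNReal.lt_add_right (ENNReal.natCast_ne_top n) one_ne_zero)

theorem untested_eq_empty_of_two_mul_sum_detTime_le {c n : ℕ} (hS : ∀ i, #(S i) ≤ c)
    (hn : c * n ≤ Fintype.card E) {t : ℕ}
    (h : 2 * ∑ e, detTime S σ e t ≤ c * n * (n + 1)) : untested S σ t n = ∅ := by
  have h0 : 2 * (#(untested S σ t n) : ℝ≥0∞) ≤ 0 :=
    ENNReal.le_of_add_le_add_left (a := c * n * (n + 1)) (by finiteness)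
      (by simpa using (mul_add_two_mul_card_untested_le_sum_detTime S σ hS hn t).trans h)
  simpa using h0

end WaitingTime

/-- Exact-cover reduction instance: `3k` elements, tests of size exactly `3`.
For any deterministic schedule `σ`:
(a) at every time, some element has waiting time at least `k`;
(b) at every time, the average waiting time `(1/(3k))·∑_e T(e,t)` is at least
`(k+1)/2`;
(c) equality in (a) (i.e. all waiting times at most `k`) or in (b) can hold at
time `t` only if the `k` tests following `t` form an exact cover. -/
theorem stmt_14 {ι : Type*} (k : ℕ) (hk : 0 < k)
    (S : ι → Finset (Fin (3 * k))) (hS : ∀ i, (S i).card = 3)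
    (σ : ℕ → ι) :
    (∀ t, ∃ e, (k : ℝ≥0∞) ≤ detTime S σ e t) ∧
    (∀ t, ((k : ℝ≥0∞) + 1) / 2
        ≤ (1 / (3 * (k : ℝ≥0∞))) * ∑ e, detTime S σ e t) ∧
    (∀ t, ((∀ e, detTime S σ e t ≤ (k : ℝ≥0∞)) ∨
        (1 / (3 * (k : ℝ≥0∞))) * (∑ e, detTime S σ e t) = ((k : ℝ≥0∞) + 1) / 2) →
      ((∀ d₁ ∈ Finset.range k, ∀ d₂ ∈ Finset.range k, d₁ ≠ d₂ →
          Disjoint (S (σ (t + d₁))) (S (σ (t + d₂)))) ∧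
        (Finset.range k).biUnion (fun d => S (σ (t + d))) = Finset.univ)) := by
  have hS' : ∀ i, #(S i) ≤ 3 := fun i => (hS i).le
  have hcard : Fintype.card (Fin (3 * k)) = 3 * k := Fintype.card_fin _
  have h3k : (3 * k : ℝ≥0∞) ≠ 0 := by simp [hk.ne']
  have h3k' : (3 * k : ℝ≥0∞) ≠ ∞ := by finiteness
  have havg : ∀ X : ℝ≥0∞, 1 / (3 * k) * X = X / (3 * k) := fun X => by
    rw [one_div, ENNReal.div_eq_inv_mul]
  refine ⟨fun t => ?_, fun t => ?_, fun t hopt => ?_⟩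
  · obtain ⟨e, he⟩ := exists_add_one_le_detTime S σ hS' (n := k - 1) (by omega) t
    exact ⟨e, by rwa [← Nat.cast_add_one, Nat.sub_add_cancel hk] at he⟩
  · rw [havg, ENNReal.div_le_div_iff_mul_le_mul two_ne_zero ENNReal.ofNat_ne_top h3k h3k']
    calc ((k : ℝ≥0∞) + 1) * (3 * k) ≤ 3 * k * (k + 1) + 2 * #(untested S σ t k) := by
          rw [mul_comm]; exact le_self_add
      _ ≤ 2 * ∑ e, detTime S σ e t := by
          exact_mod_cast mul_add_two_mul_card_untested_le_sum_detTime S σ hS' hcard.ge t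
      _ = (∑ e, detTime S σ e t) * 2 := mul_comm _ _
  have huntested : untested S σ t k = ∅ := by
    rcases hopt with hle | heq
    · exact untested_eq_empty_of_forall_detTime_le S σ hle
    · rw [havg, ENNReal.div_eq_div_iff two_ne_zero ENNReal.ofNat_ne_top h3k h3k'] at heq
      exact untested_eq_empty_of_two_mul_sum_detTime_le S σ hS' hcard.ge (by simp [heq])
  have hcover := (biUnion_range_eq_univ_iff_untested_eq_empty S σ t k).2 huntested
  have hdisj := pairwiseDisjoint_of_sum_card_le_card_biUnion (s := range k)
    (T := fun d => S (σ (t + d))) (by rw [hcover]; simp [hS, mul_comm])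
  exact ⟨fun d₁ h₁ d₂ h₂ hne => hdisj h₁ h₂ hne, hcover⟩
end
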